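/- Let X be a finite-dimensional real normed space whose norm is strictly convex, let A = {A_1, …, A_n} be a finite boundary with A_s = {a_1^s, …, a_{m_s}^s}, let d be a solution vector for A with all d_i > 0, let K_d = ⋂_{i=1}^n B_{d_i}(A_i), let D_i be the set of discrete points of A_i and HP_d(D^A) = ⋃_{i=1}^n (B_{d_i}(D_i) ∩ K_d), and let U_d^Conv = ⋂_{i=1}^n U_{d_i}(conv(A_i)). Suppose U_d^Conv ≠ ∅ and there exists an index s such that (⋃_{j=1}^{m_s} ∂B_{d_s}(a_j^s)) ∩ HP_d(D^A) ⊆ U_d^Conv. Then the boundary A is unstable, i.e., S_{A^Conv} < S_A. -/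

import Mathlib

open Metric Set

/-- `steinerSum A K = ∑ i, d_H(A_i, K)` — the functional from the Fermat–Steiner problem. -/
noncomputable def steinerSum {X : Type*} [PseudoMetricSpace X] {n : ℕ}
    (A : Fin n → Set X) (K : Set X) : ℝ :=
  ∑ i, Metric.hausdorffDist (A i) K

/-- A Steiner compact for the boundary `A`: a nonempty compact set minimizing
`steinerSum A` over nonempty compact sets. -/
def IsSteinerCompact {X : Type*} [PseudoMetricSpace X] {n : ℕ}
    (A : Fin n → Set X) (K : Set X) : Prop :=
  K.Nonempty ∧ IsCompact K ∧
    ∀ K' : Set X, K'.Nonempty → IsCompact K' → steinerSum A K ≤ steinerSum A K'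

/-- `d` is a solution vector for the boundary `A`: `d i = d_H(A_i, K)` for
some Steiner compact `K`. -/
def IsSolutionVector {X : Type*} [PseudoMetricSpace X] {n : ℕ}
    (A : Fin n → Set X) (d : Fin n → ℝ) : Prop :=
  ∃ K : Set X, IsSteinerCompact A K ∧ ∀ i, d i = Metric.hausdorffDist (A i) K

/-- `steinerInf A = S_A`, the infimum of `steinerSum A K` over nonempty compact `K`. -/
noncomputable def steinerInf {X : Type*} [PseudoMetricSpace X] {n : ℕ}
    (A : Fin n → Set X) : ℝ :=
  sInf {s : ℝ | ∃ K : Set X, K.Nonempty ∧ IsCompact K ∧ s = steinerSum A K}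

/-!
Let `K` be a Steiner compact realizing `d`, so that `S_A = ∑ d_i`, and let
`K' = ⋂ i, B_{d_i}(conv A_i)`, a convex set containing `K_d ⊇ K`. If a finite set `W ⊆ K'` lies
strictly within `d_s` of `conv A_s`, every point of `A_i` is within `d_i` of `W`, and every point
of `A_s` is strictly within `d_s` of `W`, then the compact set `conv W` has
`d_H(conv A_i, conv W) ≤ d_i` for all `i`, with strict inequality for `i = s`, so
`S_{A^Conv} < S_A`.

The points of `W` are found near a point `x ∈ K_d` within `d_i` of `a ∈ A_i`. If `a` is discrete,
`x` lies in `HP_d(D^A)`: either `x` is strictly inside a ball `B_{d_s}(b)` with `b ∈ A_s`, or it is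
on its boundary and hence in the open set `U_d^Conv`. If `a` is not discrete, `B_{d_i}(a) ∩ K_d` is
infinite, so infinitely many of its points lie in one ball `B_{d_s}(b)`, and by strict convexity the
midpoint of two of them is in the open ball and still in the convex set `K' ∩ B_{d_i}(a)`.
For `a ∈ A_s` the same two cases give a point of `K'` strictly within `d_s` of `a`: a point of
`U_d^Conv` close to `x`, or the midpoint of two points of `B_{d_s}(a) ∩ K_d`.
-/

open Filter Topology

theorem Set.Finite.exists_finite_subset_forall_exists {α β : Type*} {A : Set α} (hA : A.Finite)
    {G : Set β} {Q : α → β → Prop} (h : ∀ a ∈ A, ∃ z ∈ G, Q a z) :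
    ∃ Z ⊆ G, Z.Finite ∧ ∀ a ∈ A, ∃ z ∈ Z, Q a z := by
  choose f hfG hfQ using h
  have := hA.to_subtype
  exact ⟨range fun a : A => f a a.2, range_subset_iff.2 fun a => hfG a a.2, finite_range _,
    fun a ha => ⟨_, ⟨⟨a, ha⟩, rfl⟩, hfQ a ha⟩⟩

section Metric

variable {X : Type*} [PseudoMetricSpace X]

theorem Metric.subset_cthickening_hausdorffDist {s t : Set X} (h : hausdorffEDist s t ≠ ⊤) :
    s ⊆ cthickening (hausdorffDist s t) t := fun _ hx =>
  mem_cthickening_iff.2 <|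
    (infEDist_le_hausdorffEDist_of_mem hx).trans (ENNReal.ofReal_toReal h).ge

theorem Metric.hausdorffDist_le_of_subset_cthickening {s t : Set X} {r : ℝ} (hr : 0 ≤ r)
    (hst : s ⊆ cthickening r t) (hts : t ⊆ cthickening r s) : hausdorffDist s t ≤ r :=
  hausdorffDist_le_of_infDist hr (fun _ hx => ENNReal.toReal_le_of_le_ofReal hr (hst hx))
    fun _ hx => ENNReal.toReal_le_of_le_ofReal hr (hts hx)

theorem Set.Finite.eventually_subset_cthickening {s E : Set X} {δ : ℝ} (hs : s.Finite)
    (h : s ⊆ thickening δ E) : ∀ᶠ r in 𝓝[<] δ, s ⊆ cthickening r E := by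
  refine (hs.eventually_all.2 fun x hx => ?_).mono fun r hr x hx => hr x hx
  obtain ⟨y, hy, hxy⟩ := mem_thickening_iff.1 (h hx)
  exact mem_of_superset (Ioo_mem_nhdsLT hxy) fun r hr =>
    mem_cthickening_of_dist_le x y r E hy hr.1.le

/-- For the boundary `A` this is the set `K_d` of the paper. -/
def cthickeningInter {ι : Type*} (A : ι → Set X) (d : ι → ℝ) : Set X :=
  ⋂ i, cthickening (d i) (A i)

theorem cthickeningInter_mono {ι : Type*} {A B : ι → Set X} (h : ∀ i, A i ⊆ B i) (d : ι → ℝ) :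
    cthickeningInter A d ⊆ cthickeningInter B d :=
  iInter_mono fun i => cthickening_subset_of_subset (d i) (h i)

/-- The set `D_i`. -/
def discretePoints {n : ℕ} (A : Fin n → Set X) (d : Fin n → ℝ) (i : Fin n) : Set X :=
  {a ∈ A i | (closedBall a (d i) ∩ cthickeningInter A d).Finite}

/-- The set `HP_d(D^A) = ⋃ i, B_{d i}(D_i) ∩ K_d`. -/
def discreteNbhd {n : ℕ} (A : Fin n → Set X) (d : Fin n → ℝ) : Set X :=
  ⋃ i, (cthickening (d i) (discretePoints A d i) ∩ cthickeningInter A d)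

theorem mem_discreteNbhd {n : ℕ} {A : Fin n → Set X} {d : Fin n → ℝ} {i : Fin n} {a x : X}
    (ha : a ∈ discretePoints A d i) (hx : x ∈ cthickeningInter A d) (hax : dist a x ≤ d i) :
    x ∈ discreteNbhd A d :=
  mem_iUnion.2 ⟨i, mem_cthickening_of_dist_le x a _ _ ha (dist_comm a x ▸ hax), hx⟩

end Metric

section Normed

variable {X : Type*} [NormedAddCommGroup X] [NormedSpace ℝ X]

theorem convex_cthickeningInter {ι : Type*} {A : ι → Set X} (hA : ∀ i, Convex ℝ (A i))
    (d : ι → ℝ) : Convex ℝ (cthickeningInter A d) :=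
  convex_iInter fun i => (hA i).cthickening (d i)

theorem hausdorffDist_convexHull_le {A B : Set X} {r : ℝ} (hr : 0 ≤ r)
    (hAB : A ⊆ cthickening r (convexHull ℝ B)) (hBA : B ⊆ cthickening r (convexHull ℝ A)) :
    hausdorffDist (convexHull ℝ A) (convexHull ℝ B) ≤ r :=
  hausdorffDist_le_of_subset_cthickening hr
    (convexHull_min hAB ((convex_convexHull ℝ B).cthickening r))
    (convexHull_min hBA ((convex_convexHull ℝ A).cthickening r))

theorem mem_thickening_convexHull_of_frontier {B : Set X} (hB : B.Finite) {r : ℝ} (hr : 0 < r)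
    {x : X} (hx : x ∈ cthickening r B)
    (h : x ∈ ⋃ b ∈ B, frontier (closedBall b r) → x ∈ thickening r (convexHull ℝ B)) :
    x ∈ thickening r (convexHull ℝ B) := by
  rw [hB.isCompact.cthickening_eq_biUnion_closedBall hr.le] at hx
  obtain ⟨b, hb, hxb⟩ := mem_iUnion₂.1 hx
  rcases (mem_closedBall.1 hxb).lt_or_eq with hlt | heq
  · exact thickening_subset_of_subset r (subset_convexHull ℝ B) (mem_thickening_iff.2 ⟨b, hb, hlt⟩)
  · exact h (mem_iUnion₂.2 ⟨b, hb, by rwa [frontier_closedBall b hr.ne']⟩)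

variable [StrictConvexSpace ℝ X]

theorem Convex.inter_ball_nonempty_of_nontrivial {T : Set X} (hT : Convex ℝ T) {b : X} {r : ℝ}
    (h : (T ∩ closedBall b r).Nontrivial) : (T ∩ ball b r).Nonempty := by
  obtain ⟨x, hx, y, hy, hxy⟩ := h
  exact ⟨(1 / 2 : ℝ) • x + (1 / 2 : ℝ) • y,
    hT hx.1 hy.1 (by norm_num) (by norm_num) (by norm_num),
    combo_mem_ball_of_ne hx.2 hy.2 hxy (by norm_num) (by norm_num) (by norm_num)⟩

theorem Convex.inter_thickening_nonempty_of_infinite {T B : Set X} (hT : Convex ℝ T)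
    (hB : B.Finite) {r : ℝ} (hr : 0 ≤ r) (h : (T ∩ Metric.cthickening r B).Infinite) :
    (T ∩ Metric.thickening r B).Nonempty := by
  rw [hB.isCompact.cthickening_eq_biUnion_closedBall hr, inter_iUnion₂] at h
  obtain ⟨b, hb, hinf⟩ : ∃ b ∈ B, (T ∩ closedBall b r).Infinite := by
    by_contra! hfin
    exact h (hB.biUnion hfin)
  exact (hT.inter_ball_nonempty_of_nontrivial hinf.nontrivial).mono
    (inter_subset_inter_right T (ball_subset_thickening hb r))

end Normed

section Steiner

variable {X : Type*} [PseudoMetricSpace X] {n : ℕ} {A : Fin n → Set X} {d : Fin n → ℝ}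

theorem steinerInf_le_steinerSum (A : Fin n → Set X) {K : Set X} (hK : K.Nonempty)
    (hKc : IsCompact K) : steinerInf A ≤ steinerSum A K :=
  csInf_le ⟨0, by rintro _ ⟨K', -, -, rfl⟩; exact Finset.sum_nonneg fun i _ => hausdorffDist_nonneg⟩
    ⟨K, hK, hKc, rfl⟩

theorem IsSteinerCompact.steinerInf_eq {K : Set X} (h : IsSteinerCompact A K) :
    steinerInf A = steinerSum A K :=
  le_antisymm (steinerInf_le_steinerSum A h.1 h.2.1) <|
    le_csInf ⟨_, K, h.1, h.2.1, rfl⟩ fun _ ⟨K', hK', hK'c, hs⟩ => hs ▸ h.2.2 K' hK' hK'c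

theorem IsSolutionVector.steinerInf_eq (h : IsSolutionVector A d) : steinerInf A = ∑ i, d i := by
  obtain ⟨K, hK, hd⟩ := h
  rw [hK.steinerInf_eq, steinerSum]
  exact Finset.sum_congr rfl fun i _ => (hd i).symm

theorem IsSolutionVector.exists_mem_cthickeningInter (h : IsSolutionVector A d)
    (hA : ∀ i, (A i).Nonempty ∧ Bornology.IsBounded (A i)) {i : Fin n} {a : X} (ha : a ∈ A i) :
    ∃ x ∈ cthickeningInter A d, dist a x ≤ d i := by
  obtain ⟨K, ⟨hKne, hKc, -⟩, hd⟩ := h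
  have hfin : ∀ j, hausdorffEDist (A j) K ≠ ⊤ := fun j =>
    hausdorffEDist_ne_top_of_nonempty_of_bounded (hA j).1 hKne (hA j).2 hKc.isBounded
  have haK : a ∈ cthickening (d i) K := hd i ▸ subset_cthickening_hausdorffDist (hfin i) ha
  rw [hKc.cthickening_eq_biUnion_closedBall (hd i ▸ hausdorffDist_nonneg)] at haK
  obtain ⟨x, hxK, hax⟩ := mem_iUnion₂.1 haK
  refine ⟨x, mem_iInter.2 fun j => ?_, hax⟩
  rw [hd j, hausdorffDist_comm]
  exact subset_cthickening_hausdorffDist (hausdorffEDist_comm (s := A j) ▸ hfin j) hxK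

end Steiner

section Convexification

variable {X : Type*} [NormedAddCommGroup X] [NormedSpace ℝ X] {n : ℕ} {A : Fin n → Set X}
  {d : Fin n → ℝ} {s : Fin n}

theorem steinerInf_convexHull_lt_of_finite (hA : (A s).Finite) (hd : ∀ i, 0 < d i) {W : Set X}
    (hW : W.Finite) (hWne : W.Nonempty)
    (hWK : W ⊆ cthickeningInter (fun i => convexHull ℝ (A i)) d ∩
      thickening (d s) (convexHull ℝ (A s)))
    (hAW : ∀ i, A i ⊆ cthickening (d i) W) (hAWs : A s ⊆ thickening (d s) W) :
    steinerInf (fun i => convexHull ℝ (A i)) < ∑ i, d i := by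
  obtain ⟨r, ⟨hr0, hrs⟩, hWr, hAr⟩ : ∃ r ∈ Ioo 0 (d s),
      W ⊆ cthickening r (convexHull ℝ (A s)) ∧ A s ⊆ cthickening r W :=
    (Eventually.and (Ioo_mem_nhdsLT (hd s)) <|
      (hW.eventually_subset_cthickening (hWK.trans inter_subset_right)).and
        (hA.eventually_subset_cthickening hAWs)).exists
  have hWhull : ∀ r, cthickening r W ⊆ cthickening r (convexHull ℝ W) := fun r =>
    cthickening_subset_of_subset r (subset_convexHull ℝ W)
  have hle : ∀ i, hausdorffDist (convexHull ℝ (A i)) (convexHull ℝ W) ≤ d i := fun i =>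
    hausdorffDist_convexHull_le (hd i).le ((hAW i).trans (hWhull _))
      fun _ hz => mem_iInter.1 (hWK hz).1 i
  have hlt : hausdorffDist (convexHull ℝ (A s)) (convexHull ℝ W) < d s :=
    (hausdorffDist_convexHull_le hr0.le (hAr.trans (hWhull r)) hWr).trans_lt hrs
  calc steinerInf (fun i => convexHull ℝ (A i))
      ≤ steinerSum (fun i => convexHull ℝ (A i)) (convexHull ℝ W) :=
        steinerInf_le_steinerSum _ (hWne.convexHull (𝕜 := ℝ)) (hW.isCompact_convexHull (𝕜 := ℝ))
    _ < ∑ i, d i := Finset.sum_lt_sum (fun i _ => hle i) ⟨s, Finset.mem_univ s, hlt⟩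

theorem steinerInf_convexHull_lt (hA : ∀ i, (A i).Finite) (hd : ∀ i, 0 < d i)
    (hAs : (A s).Nonempty)
    (hwit : ∀ i, ∀ a ∈ A i, ∃ z ∈ cthickeningInter (fun j => convexHull ℝ (A j)) d ∩
      thickening (d s) (convexHull ℝ (A s)), dist a z ≤ d i)
    (hwit_s : ∀ a ∈ A s, ∃ z ∈ cthickeningInter (fun j => convexHull ℝ (A j)) d, dist a z < d s) :
    steinerInf (fun i => convexHull ℝ (A i)) < ∑ i, d i := by
  have hwit_s' : ∀ a ∈ A s, ∃ z ∈ cthickeningInter (fun j => convexHull ℝ (A j)) d ∩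
      thickening (d s) (convexHull ℝ (A s)), dist a z < d s := fun a ha =>
    let ⟨z, hz, haz⟩ := hwit_s a ha
    ⟨z, ⟨hz, mem_thickening_iff.2 ⟨a, subset_convexHull ℝ _ ha, dist_comm a z ▸ haz⟩⟩, haz⟩
  choose Z hZ hZfin hZA using fun i => (hA i).exists_finite_subset_forall_exists (hwit i)
  obtain ⟨Zs, hZs, hZsfin, hZsA⟩ := (hA s).exists_finite_subset_forall_exists hwit_s'
  obtain ⟨a, ha⟩ := hAs
  refine steinerInf_convexHull_lt_of_finite (hA s) hd ((finite_iUnion hZfin).union hZsfin)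
    ?_ (union_subset (iUnion_subset hZ) hZs) (fun i b hb => ?_) fun b hb => ?_
  · obtain ⟨z, hz, -⟩ := hZsA a ha
    exact ⟨z, subset_union_right hz⟩
  · obtain ⟨z, hz, hbz⟩ := hZA i b hb
    exact mem_cthickening_of_dist_le b z _ _ (subset_union_left (mem_iUnion_of_mem i hz)) hbz
  · obtain ⟨z, hz, hbz⟩ := hZsA b hb
    exact mem_thickening_iff.2 ⟨z, subset_union_right hz, hbz⟩

end Convexification

section FrontierCondition

variable {X : Type*} [NormedAddCommGroup X] [NormedSpace ℝ X] [StrictConvexSpace ℝ X] {n : ℕ}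
  {A : Fin n → Set X} {d : Fin n → ℝ} {s i : Fin n} {a x : X}

theorem exists_mem_thickening_convexHull_of_frontier_subset (hAs : (A s).Finite) (hd : 0 < d s)
    (hs : (⋃ a ∈ A s, frontier (closedBall a (d s))) ∩ discreteNbhd A d ⊆
      ⋂ i, thickening (d i) (convexHull ℝ (A i)))
    (ha : a ∈ A i) (hx : x ∈ cthickeningInter A d) (hax : dist a x ≤ d i) :
    ∃ z ∈ cthickeningInter (fun j => convexHull ℝ (A j)) d ∩
      thickening (d s) (convexHull ℝ (A s)), dist a z ≤ d i := by
  have hKd := cthickeningInter_mono (fun j => subset_convexHull ℝ (A j)) d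
  by_cases hD : a ∈ discretePoints A d i
  · refine ⟨x, ⟨hKd hx, ?_⟩, hax⟩
    exact mem_thickening_convexHull_of_frontier hAs hd (mem_iInter.1 hx s) fun hfr =>
      mem_iInter.1 (hs ⟨hfr, mem_discreteNbhd hD hx hax⟩) s
  · have hinf : (closedBall a (d i) ∩ cthickeningInter A d).Infinite := fun hfin => hD ⟨ha, hfin⟩
    obtain ⟨z, ⟨hzK, hza⟩, hzs⟩ :=
      ((convex_cthickeningInter (fun j => convex_convexHull ℝ (A j)) d).inter
        (convex_closedBall a (d i))).inter_thickening_nonempty_of_infinite hAs hd.le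
        (hinf.mono fun y hy => ⟨⟨hKd hy.2, hy.1⟩, mem_iInter.1 hy.2 s⟩)
    exact ⟨z, ⟨hzK, thickening_subset_of_subset _ (subset_convexHull ℝ _) hzs⟩,
      mem_closedBall'.1 hza⟩

theorem exists_dist_lt_of_frontier_subset (hd : 0 < d s)
    (hs : (⋃ a ∈ A s, frontier (closedBall a (d s))) ∩ discreteNbhd A d ⊆
      ⋂ i, thickening (d i) (convexHull ℝ (A i)))
    (ha : a ∈ A s) (hx : x ∈ cthickeningInter A d) (hax : dist a x ≤ d s) :
    ∃ z ∈ cthickeningInter (fun j => convexHull ℝ (A j)) d, dist a z < d s := by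
  have hKd := cthickeningInter_mono (fun j => subset_convexHull ℝ (A j)) d
  by_cases hD : a ∈ discretePoints A d s
  · rcases hax.lt_or_eq with hlt | heq
    · exact ⟨x, hKd hx, hlt⟩
    have hxU : x ∈ ⋂ i, thickening (d i) (convexHull ℝ (A i)) :=
      hs ⟨mem_iUnion₂.2 ⟨a, ha, by rw [frontier_closedBall a hd.ne', mem_sphere']; exact heq⟩,
        mem_discreteNbhd hD hx hax⟩
    have hxa : x ∈ closure (ball a (d s)) := by
      rw [closure_ball a hd.ne']
      exact mem_closedBall'.2 hax
    obtain ⟨z, hzU, hza⟩ :=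
      mem_closure_iff.1 hxa _ (isOpen_iInter_of_finite fun i => isOpen_thickening) hxU
    exact ⟨z, iInter_mono (fun i => thickening_subset_cthickening _ _) hzU, mem_ball'.1 hza⟩
  · have hinf : (cthickeningInter (fun j => convexHull ℝ (A j)) d ∩ closedBall a (d s)).Infinite :=
      fun hfin => hD ⟨ha, hfin.subset fun y hy => ⟨hKd hy.2, hy.1⟩⟩
    obtain ⟨z, hzK, hza⟩ := (convex_cthickeningInter (fun j => convex_convexHull ℝ (A j)) d)
      |>.inter_ball_nonempty_of_nontrivial hinf.nontrivial
    exact ⟨z, hzK, mem_ball'.1 hza⟩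

end FrontierCondition

theorem stmt19_general {X : Type*} [NormedAddCommGroup X] [NormedSpace ℝ X]
    [StrictConvexSpace ℝ X]
    (n : ℕ) (A : Fin n → Set X)
    (hA : ∀ i, (A i).Nonempty ∧ (A i).Finite)
    (d : Fin n → ℝ) (hd : IsSolutionVector A d) (hdpos : ∀ i, 0 < d i)
    (Kd : Set X) (hKd : Kd = ⋂ i, cthickening (d i) (A i))
    (D : Fin n → Set X) (hD : ∀ i, D i = {a ∈ A i | (closedBall a (d i) ∩ Kd).Finite})
    (HPD : Set X) (hHPD : HPD = ⋃ i, (cthickening (d i) (D i) ∩ Kd))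
    (UdConv : Set X) (hUdConv : UdConv = ⋂ i, thickening (d i) (convexHull ℝ (A i)))
    (hs : ∃ s : Fin n, (⋃ a ∈ A s, frontier (closedBall a (d s))) ∩ HPD ⊆ UdConv) :
    steinerInf (fun i => convexHull ℝ (A i)) < steinerInf A := by
  obtain ⟨s, hs⟩ := hs
  subst hKd hHPD hUdConv
  obtain rfl : D = discretePoints A d := funext hD
  have hnear : ∀ i, ∀ a ∈ A i, ∃ x ∈ cthickeningInter A d, dist a x ≤ d i := fun i a ha =>
    hd.exists_mem_cthickeningInter (fun j => ⟨(hA j).1, (hA j).2.isCompact.isBounded⟩) ha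
  rw [hd.steinerInf_eq]
  refine steinerInf_convexHull_lt (fun i => (hA i).2) hdpos (hA s).1
    (fun i a ha => ?_) fun a ha => ?_
  · obtain ⟨x, hx, hax⟩ := hnear i a ha
    exact exists_mem_thickening_convexHull_of_frontier_subset (hA s).2 (hdpos s) hs ha hx hax
  · obtain ⟨x, hx, hax⟩ := hnear s a ha
    exact exists_dist_lt_of_frontier_subset (hdpos s) hs ha hx hax

theorem stmt19 {X : Type*} [NormedAddCommGroup X] [NormedSpace ℝ X]
    [FiniteDimensional ℝ X] [StrictConvexSpace ℝ X]
    (n : ℕ) (A : Fin n → Set X)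
    (hA : ∀ i, (A i).Nonempty ∧ (A i).Finite)
    (d : Fin n → ℝ) (hd : IsSolutionVector A d) (hdpos : ∀ i, 0 < d i)
    (Kd : Set X) (hKd : Kd = ⋂ i, cthickening (d i) (A i))
    (D : Fin n → Set X) (hD : ∀ i, D i = {a ∈ A i | (closedBall a (d i) ∩ Kd).Finite})
    (HPD : Set X) (hHPD : HPD = ⋃ i, (cthickening (d i) (D i) ∩ Kd))
    (UdConv : Set X) (hUdConv : UdConv = ⋂ i, thickening (d i) (convexHull ℝ (A i)))
    (hUne : UdConv.Nonempty)
    (hs : ∃ s : Fin n, (⋃ a ∈ A s, frontier (closedBall a (d s))) ∩ HPD ⊆ UdConv) :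
    steinerInf (fun i => convexHull ℝ (A i)) < steinerInf A :=
  stmt19_general n A hA d hd hdpos Kd hKd D hD HPD hHPD UdConv hUdConv hs
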